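/- arXiv:1907.01178 — 3 statements merged into one kernel-verified Lean document; each statement's English description precedes it below -/
import Mathlib

section
/- Let l1, l2, l3 > 0 with l1 + l2 + l3 = 1 and max(l1,l2,l3) < 1/2, set xj = 1 − 2*lj, let F = F_{1/2}^{l1,l2,l3}, and let ψ: ℝ/ℤ → ℝ/ℤ be the rotation ψ(u) = u − l2 − 1/2 (mod 1). Then for all but finitely many u ∈ ℝ/ℤ one has ψ(F²(u)) = T^{x2,x3,x1}(ψ(u)); that is, the square of F is conjugate by a rotation to the Arnoux–Rauzy map with parameters (x2, x3, x1). In particular, under the correspondence xj = 1 − 2*lj, the squares of the maps F_{1/2}^{l1,l2,l3} with max lj < 1/2 are, up to rotation conjugacy, exactly the Arnoux–Rauzy maps. -/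
open Set

noncomputable section

local instance : Fact ((0:ℝ) < 1) := ⟨one_pos⟩

/-- Representative in `[0,1)` of a point of the circle `ℝ/ℤ`. -/
def rep (x : AddCircle (1:ℝ)) : ℝ := (AddCircle.equivIco 1 0 x : ℝ)

/-- Projection `ℝ → ℝ/ℤ`. -/
def toCirc (t : ℝ) : AddCircle (1:ℝ) := (t : AddCircle (1:ℝ))

/-- The fully flipped 3-interval exchange transformation `F_τ^{l1,l2,l3}`
(it depends only on `l1`, `l2`, `τ`, since `l3 = 1 - l1 - l2`). -/
def FF (l1 l2 τ : ℝ) (x : AddCircle (1:ℝ)) : AddCircle (1:ℝ) :=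
  if rep x < l1 then toCirc (l1 - rep x + τ)
  else if rep x < l1 + l2 then toCirc (2*l1 + l2 - rep x + τ)
  else toCirc (l1 + l2 + 1 - rep x + τ)

/-- The Arnoux–Rauzy map `T^{x1,x2,x3}` of `ℝ/ℤ`. -/
def ARmap (x1 x2 x3 : ℝ) (u : AddCircle (1:ℝ)) : AddCircle (1:ℝ) :=
  if rep u < x1/2 then toCirc (rep u + x1/2 + 1/2)
  else if rep u < x1 then toCirc (rep u - x1/2 + 1/2)
  else if rep u < x1 + x2/2 then toCirc (rep u + x2/2 + 1/2)
  else if rep u < x1 + x2 then toCirc (rep u - x2/2 + 1/2)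
  else if rep u < x1 + x2 + x3/2 then toCirc (rep u + x3/2 + 1/2)
  else toCirc (rep u - x3/2 + 1/2)

lemma coe_rep (u : AddCircle (1:ℝ)) : toCirc (rep u) = u :=
  (AddCircle.equivIco 1 0).symm_apply_apply u

lemma rep_mem (u : AddCircle (1:ℝ)) : rep u ∈ Set.Ico (0:ℝ) 1 := by
  simpa [rep] using (AddCircle.equivIco 1 0 u).2

lemma rep_coe (t : ℝ) : rep (toCirc t) = Int.fract t := by
  simpa [rep, toCirc] using AddCircle.coe_equivIco_mk_apply (1:ℝ) 0 t

lemma toCirc_sub (s t : ℝ) : toCirc (s - t) = toCirc s - toCirc t := by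
  simp [toCirc]

lemma toCirc_eq_of (s t : ℝ) (n : ℤ) (h : s = t + n) : toCirc s = toCirc t := by
  subst h
  rw [toCirc, toCirc, QuotientAddGroup.mk_add]
  have : ((n:ℝ) : AddCircle (1:ℝ)) = 0 := by
    rw [AddCircle.coe_eq_zero_iff]; exact ⟨n, by simp⟩
  rw [this, add_zero]

lemma rep_coe_of (t : ℝ) (h0 : 0 ≤ t) (h1 : t < 1) : rep (toCirc t) = t := by
  rw [rep_coe, Int.fract_eq_self.2 ⟨h0, h1⟩]

lemma rep_coe_of' (t : ℝ) (h0 : 1 ≤ t) (h1 : t < 2) : rep (toCirc t) = t - 1 := by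
  rw [rep_coe, ← Int.fract_sub_intCast t 1,
    Int.fract_eq_self.2 ⟨by push_cast; linarith, by push_cast; linarith⟩]
  norm_num

lemma rep_coe_neg (t : ℝ) (h0 : -1 ≤ t) (h1 : t < 0) : rep (toCirc t) = t + 1 := by
  rw [rep_coe]
  have h : Int.fract t = Int.fract (t + 1) := by simp
  rw [h, Int.fract_eq_self.2 ⟨by linarith, by linarith⟩]

set_option maxHeartbeats 1000000 in
lemma key (l1 l2 l3 : ℝ) (h1 : 0 < l1) (h2 : 0 < l2) (h3 : 0 < l3)
    (hsum : l1 + l2 + l3 = 1) (hm1 : l1 < 1/2) (hm2 : l2 < 1/2) (hm3 : l3 < 1/2)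
    (u : AddCircle (1:ℝ))
    (e1 : rep u ≠ 1/2 - l2) (e2 : rep u ≠ 2*l1 + l2 - 1/2) (e3 : rep u ≠ l2 + 1/2) :
    (FF l1 l2 (1/2)) ((FF l1 l2 (1/2)) u) - toCirc (l2 + 1/2) =
      ARmap (1 - 2*l2) (1 - 2*l3) (1 - 2*l1) (u - toCirc (l2 + 1/2)) := by
  set r := rep u with hrdef
  have hr0 : 0 ≤ r := (rep_mem u).1
  have hr1 : r < 1 := (rep_mem u).2
  have hu : u = toCirc r := (coe_rep u).symm
  have hv : u - toCirc (l2 + 1/2) = toCirc (r - (l2 + 1/2)) := by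
    rw [toCirc_sub, ← hu]
  rcases lt_or_ge r l1 with hA | hBC
  · -- Case A : r < l1
    have hF1 : FF l1 l2 (1/2) u = toCirc (l1 - r + 1/2) := by
      rw [FF, if_pos hA]
    rcases lt_or_ge r (1/2 - l2) with hA1 | hA2'
    · -- A1 : r < 1/2 - l2
      have hrep1 : rep (toCirc (l1 - r + 1/2)) = l1 - r + 1/2 :=
        rep_coe_of _ (by linarith) (by linarith)
      have hF2 : FF l1 l2 (1/2) (FF l1 l2 (1/2) u) =
          toCirc (l1 + l2 + 1 - (l1 - r + 1/2) + 1/2) := by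
        rw [hF1, FF, hrep1, if_neg (by linarith), if_neg (by linarith)]
      have hw : rep (toCirc (r - (l2 + 1/2))) = r - (l2 + 1/2) + 1 :=
        rep_coe_neg _ (by linarith) (by linarith)
      rw [hF2, hv, ARmap, hw, if_neg (by linarith), if_pos (by linarith),
        ← toCirc_sub]
      exact toCirc_eq_of _ _ 0 (by push_cast; ring)
    · -- A2 : 1/2 - l2 < r < l1
      have hA2 : 1/2 - l2 < r := lt_of_le_of_ne hA2' (Ne.symm e1)
      have hrep1 : rep (toCirc (l1 - r + 1/2)) = l1 - r + 1/2 :=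
        rep_coe_of _ (by linarith) (by linarith)
      have hF2 : FF l1 l2 (1/2) (FF l1 l2 (1/2) u) =
          toCirc (2*l1 + l2 - (l1 - r + 1/2) + 1/2) := by
        rw [hF1, FF, hrep1, if_neg (by linarith), if_pos (by linarith)]
      have hw : rep (toCirc (r - (l2 + 1/2))) = r - (l2 + 1/2) + 1 :=
        rep_coe_neg _ (by linarith) (by linarith)
      rw [hF2, hv, ARmap, hw, if_neg (by linarith), if_neg (by linarith),
        if_pos (by linarith), ← toCirc_sub]
      exact toCirc_eq_of _ _ (-1) (by push_cast; linarith)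
  · rcases lt_or_ge r (l1 + l2) with hB | hC
    · -- Case B : l1 ≤ r < l1 + l2
      have hF1 : FF l1 l2 (1/2) u = toCirc (2*l1 + l2 - r + 1/2) := by
        rw [FF, if_neg (by linarith), if_pos hB]
      rcases lt_or_ge r (2*l1 + l2 - 1/2) with hB1 | hB2'
      · -- B1
        have hrep1 : rep (toCirc (2*l1 + l2 - r + 1/2)) = 2*l1 + l2 - r + 1/2 - 1 :=
          rep_coe_of' _ (by linarith) (by linarith)
        have hF2 : FF l1 l2 (1/2) (FF l1 l2 (1/2) u) =
            toCirc (l1 - (2*l1 + l2 - r + 1/2 - 1) + 1/2) := by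
          rw [hF1, FF, hrep1, if_pos (by linarith)]
        have hw : rep (toCirc (r - (l2 + 1/2))) = r - (l2 + 1/2) + 1 :=
          rep_coe_neg _ (by linarith) (by linarith)
        rw [hF2, hv, ARmap, hw, if_neg (by linarith), if_neg (by linarith),
          if_neg (by linarith), if_pos (by linarith), ← toCirc_sub]
        exact toCirc_eq_of _ _ (-1) (by push_cast; linarith)
      · -- B2
        have hB2 : 2*l1 + l2 - 1/2 < r := lt_of_le_of_ne hB2' (Ne.symm e2)
        have hrep1 : rep (toCirc (2*l1 + l2 - r + 1/2)) = 2*l1 + l2 - r + 1/2 :=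
          rep_coe_of _ (by linarith) (by linarith)
        have hF2 : FF l1 l2 (1/2) (FF l1 l2 (1/2) u) =
            toCirc (l1 + l2 + 1 - (2*l1 + l2 - r + 1/2) + 1/2) := by
          rw [hF1, FF, hrep1, if_neg (by linarith), if_neg (by linarith)]
        have hw : rep (toCirc (r - (l2 + 1/2))) = r - (l2 + 1/2) + 1 :=
          rep_coe_neg _ (by linarith) (by linarith)
        rw [hF2, hv, ARmap, hw, if_neg (by linarith), if_neg (by linarith),
          if_neg (by linarith), if_neg (by linarith), if_pos (by linarith),
          ← toCirc_sub]
        exact toCirc_eq_of _ _ (-1) (by push_cast; linarith)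
    · -- Case C : l1 + l2 ≤ r
      have hF1 : FF l1 l2 (1/2) u = toCirc (l1 + l2 + 1 - r + 1/2) := by
        rw [FF, if_neg (by linarith), if_neg (by linarith)]
      rcases lt_or_ge r (l2 + 1/2) with hC1 | hC2'
      · -- C1
        have hrep1 : rep (toCirc (l1 + l2 + 1 - r + 1/2)) = l1 + l2 + 1 - r + 1/2 - 1 :=
          rep_coe_of' _ (by linarith) (by linarith)
        have hF2 : FF l1 l2 (1/2) (FF l1 l2 (1/2) u) =
            toCirc (2*l1 + l2 - (l1 + l2 + 1 - r + 1/2 - 1) + 1/2) := by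
          rw [hF1, FF, hrep1, if_neg (by linarith), if_pos (by linarith)]
        have hw : rep (toCirc (r - (l2 + 1/2))) = r - (l2 + 1/2) + 1 :=
          rep_coe_neg _ (by linarith) (by linarith)
        rw [hF2, hv, ARmap, hw, if_neg (by linarith), if_neg (by linarith),
          if_neg (by linarith), if_neg (by linarith), if_neg (by linarith),
          ← toCirc_sub]
        exact toCirc_eq_of _ _ (-1) (by push_cast; linarith)
      · -- C2
        have hC2 : l2 + 1/2 < r := lt_of_le_of_ne hC2' (Ne.symm e3)
        have hrep1 : rep (toCirc (l1 + l2 + 1 - r + 1/2)) = l1 + l2 + 1 - r + 1/2 - 1 :=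
          rep_coe_of' _ (by linarith) (by linarith)
        have hF2 : FF l1 l2 (1/2) (FF l1 l2 (1/2) u) =
            toCirc (l1 - (l1 + l2 + 1 - r + 1/2 - 1) + 1/2) := by
          rw [hF1, FF, hrep1, if_pos (by linarith)]
        have hw : rep (toCirc (r - (l2 + 1/2))) = r - (l2 + 1/2) :=
          rep_coe_of _ (by linarith) (by linarith)
        rw [hF2, hv, ARmap, hw, if_pos (by linarith), ← toCirc_sub]
        exact toCirc_eq_of _ _ (-1) (by push_cast; linarith)

/-- The square of `F_{1/2}^{l1,l2,l3}` (with `max lj < 1/2`) is conjugate, via the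
rotation `ψ(u) = u - l2 - 1/2`, to the Arnoux–Rauzy map with parameters
`(x2, x3, x1) = (1-2l2, 1-2l3, 1-2l1)`, away from finitely many points. -/
theorem statement3 (l1 l2 l3 : ℝ)
    (h1 : 0 < l1) (h2 : 0 < l2) (h3 : 0 < l3) (hsum : l1 + l2 + l3 = 1)
    (hmax : max l1 (max l2 l3) < 1/2) :
    {u : AddCircle (1:ℝ) |
      (FF l1 l2 (1/2)) ((FF l1 l2 (1/2)) u) - toCirc (l2 + 1/2) ≠
        ARmap (1 - 2*l2) (1 - 2*l3) (1 - 2*l1) (u - toCirc (l2 + 1/2))}.Finite := by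
  have hm1 : l1 < 1/2 := lt_of_le_of_lt (le_max_left _ _) hmax
  have hm2 : l2 < 1/2 :=
    lt_of_le_of_lt (le_trans (le_max_left _ _) (le_max_right _ _)) hmax
  have hm3 : l3 < 1/2 :=
    lt_of_le_of_lt (le_trans (le_max_right _ _) (le_max_right _ _)) hmax
  apply Set.Finite.subset
    (((Set.finite_singleton (toCirc (l2 + 1/2))).insert
      (toCirc (2*l1 + l2 - 1/2))).insert (toCirc (1/2 - l2)))
  intro u hu
  simp only [Set.mem_setOf_eq] at hu
  by_contra hn
  simp only [Set.mem_insert_iff, Set.mem_singleton_iff] at hn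
  push_neg at hn
  obtain ⟨n1, n2, n3⟩ := hn
  refine hu (key l1 l2 l3 h1 h2 h3 hsum hm1 hm2 hm3 u ?_ ?_ ?_)
  · intro h; exact n1 (by rw [← coe_rep u, h])
  · intro h; exact n2 (by rw [← coe_rep u, h])
  · intro h; exact n3 (by rw [← coe_rep u, h])

end
end

section
/- Let l1, l2, l3 > 0 with l1 + l2 + l3 = 1, let max(l1,l2,l3) < τ ≤ 1/2, and set r = 1/2 − τ and xj = 1 − 2*lj. Let F = F_τ^{l1,l2,l3}. Then 0 < τ−l2 < l1 < l1+τ−l3 < l1+l2 < l2+τ < 1, and on the six intervals I2⁻ = (0, τ−l2), I3⁺ = (τ−l2, l1), I3⁻ = (l1, l1+τ−l3), I1⁺ = (l1+τ−l3, l1+l2), I1⁻ = (l1+l2, l2+τ), I2⁺ = (l2+τ, 1), whose lengths are respectively x2/2 − r, x3/2 + r, x3/2 − r, x1/2 + r, x1/2 − r, x2/2 + r, the square F² satisfies F²(x) ≡ x + lj (mod 1) for x ∈ Ij⁻ and F²(x) ≡ x − lj (mod 1) for x ∈ Ij⁺ (j = 1,2,3). In particular F² is a 6-interval exchange transformation,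 every displacement F²(x) − x lies in the set {±l1, ±l2, ±l3} (mod 1), and F²(x) ≠ x for every x in these six intervals. -/
open Set

noncomputable section

/-! On each of the six arcs, `x` and `F x` each lie in a single interval of continuity, so
`F²` there is the composition of two flips `x ↦ cᵢ - x` and `y ↦ cⱼ - y`, that is, the
translation by `cⱼ - cᵢ`. That `x` and `F x` land in the claimed intervals comes down to
linear inequalities that follow from `max lⱼ < τ ≤ 1/2`. -/

lemma rep_toCirc {t : ℝ} (ht : t ∈ Ico 0 1) : rep (toCirc t) = t :=
  AddCircle.equivIco_coe_of_mem (by rwa [zero_add])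

lemma toCirc_add_one (t : ℝ) : toCirc (t + 1) = toCirc t :=
  AddCircle.coe_add_period 1 t

lemma toCirc_add_ne_self {d : ℝ} (hd : d ∈ Ioo (-1) 1) (hd0 : d ≠ 0) (x : ℝ) :
    toCirc (x + d) ≠ toCirc x := by
  unfold toCirc
  rw [Ne, AddCircle.coe_add, add_eq_left, AddCircle.coe_eq_zero_iff]
  rintro ⟨n, rfl⟩
  rw [zsmul_one] at hd hd0
  obtain ⟨hlo, hhi⟩ := hd
  have hn : n = 0 := by
    have : (-1 : ℤ) < n := by exact_mod_cast hlo
    have : n < 1 := by exact_mod_cast hhi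
    omega
  simp [hn] at hd0

section Pieces

variable {l1 l2 τ x : ℝ}

lemma FF_toCirc_of_lt (hx : x ∈ Ico 0 1) (h : x < l1) :
    FF l1 l2 τ (toCirc x) = toCirc (l1 - x + τ) := by
  rw [FF, rep_toCirc hx, if_pos h]

lemma FF_toCirc_of_le_of_lt (hx : x ∈ Ico 0 1) (h : l1 ≤ x) (h' : x < l1 + l2) :
    FF l1 l2 τ (toCirc x) = toCirc (2*l1 + l2 - x + τ) := by
  rw [FF, rep_toCirc hx, if_neg h.not_gt, if_pos h']

lemma FF_toCirc_of_le (hx : x ∈ Ico 0 1) (h : l1 ≤ x) (h' : l1 + l2 ≤ x) :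
    FF l1 l2 τ (toCirc x) = toCirc (l1 + l2 - x + τ) := by
  rw [FF, rep_toCirc hx, if_neg h.not_gt, if_neg h'.not_gt,
    show l1 + l2 + 1 - x + τ = (l1 + l2 - x + τ) + 1 by ring, toCirc_add_one]

end Pieces

section Square

variable {l1 l2 l3 τ : ℝ}

lemma FF_FF_toCirc_eq_add_l2 (hsum : l1 + l2 + l3 = 1) (hl1 : l1 < τ) (hl3 : l3 < τ)
    (hτ : τ ≤ 1/2) :
    ∀ x ∈ Ioo 0 (τ - l2), FF l1 l2 τ (FF l1 l2 τ (toCirc x)) = toCirc (x + l2) := by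
  rintro x ⟨ha, hb⟩
  rw [FF_toCirc_of_lt ⟨ha.le, by linarith⟩ (by linarith),
    FF_toCirc_of_le ⟨by linarith, by linarith⟩ (by linarith) (by linarith)]
  ring_nf

lemma FF_FF_toCirc_eq_sub_l3 (hsum : l1 + l2 + l3 = 1) (hl1 : l1 < τ) (hl2 : l2 < τ)
    (hτ : τ ≤ 1/2) :
    ∀ x ∈ Ioo (τ - l2) l1, FF l1 l2 τ (FF l1 l2 τ (toCirc x)) = toCirc (x - l3) := by
  rintro x ⟨ha, hb⟩
  rw [FF_toCirc_of_lt ⟨by linarith, by linarith⟩ hb,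
    FF_toCirc_of_le_of_lt ⟨by linarith, by linarith⟩ (by linarith) (by linarith),
    ← toCirc_add_one (x - l3)]
  congr 1
  linarith

lemma FF_FF_toCirc_eq_add_l3 (hsum : l1 + l2 + l3 = 1) (hl1 : l1 < τ) (hl2 : l2 < τ)
    (hτ : τ ≤ 1/2) :
    ∀ x ∈ Ioo l1 (l1 + τ - l3), FF l1 l2 τ (FF l1 l2 τ (toCirc x)) = toCirc (x + l3) := by
  rintro x ⟨ha, hb⟩
  have hy : 2*l1 + l2 - x + τ = (l1 - l3 - x + τ) + 1 := by linarith
  rw [FF_toCirc_of_le_of_lt ⟨by linarith, by linarith⟩ ha.le (by linarith), hy, toCirc_add_one,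
    FF_toCirc_of_lt ⟨by linarith, by linarith⟩ (by linarith)]
  ring_nf

lemma FF_FF_toCirc_eq_sub_l1 (h1 : 0 < l1) (hsum : l1 + l2 + l3 = 1) (hl2 : l2 < τ)
    (hl3 : l3 < τ) :
    ∀ x ∈ Ioo (l1 + τ - l3) (l1 + l2),
      FF l1 l2 τ (FF l1 l2 τ (toCirc x)) = toCirc (x - l1) := by
  rintro x ⟨ha, hb⟩
  rw [FF_toCirc_of_le_of_lt ⟨by linarith, by linarith⟩ (by linarith) hb,
    FF_toCirc_of_le ⟨by linarith, by linarith⟩ (by linarith) (by linarith)]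
  ring_nf

lemma FF_FF_toCirc_eq_add_l1 (hsum : l1 + l2 + l3 = 1) (hl2 : l2 < τ) (hl3 : l3 < τ)
    (hτ : τ ≤ 1/2) :
    ∀ x ∈ Ioo (l1 + l2) (l2 + τ), FF l1 l2 τ (FF l1 l2 τ (toCirc x)) = toCirc (x + l1) := by
  rintro x ⟨ha, hb⟩
  rw [FF_toCirc_of_le ⟨by linarith, by linarith⟩ (by linarith) ha.le,
    FF_toCirc_of_le_of_lt ⟨by linarith, by linarith⟩ (by linarith) (by linarith)]
  ring_nf

lemma FF_FF_toCirc_eq_sub_l2 (hsum : l1 + l2 + l3 = 1) (hl1 : l1 < τ) (hl3 : l3 < τ)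
    (hτ : τ ≤ 1/2) :
    ∀ x ∈ Ioo (l2 + τ) 1, FF l1 l2 τ (FF l1 l2 τ (toCirc x)) = toCirc (x - l2) := by
  rintro x ⟨ha, hb⟩
  rw [FF_toCirc_of_le ⟨by linarith, hb⟩ (by linarith) (by linarith),
    FF_toCirc_of_lt ⟨by linarith, by linarith⟩ (by linarith)]
  ring_nf

end Square

/-- For `max lj < τ ≤ 1/2`, the square of `F_τ^{l1,l2,l3}` is a 6-interval exchange
transformation: the circle splits (up to six points) into the six arcs
`I2⁻, I3⁺, I3⁻, I1⁺, I1⁻, I2⁺`, of the indicated lengths, and `F²` is the translation by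
`+lj` on `Ij⁻` and by `-lj` on `Ij⁺`; in particular every displacement lies in
`{±l1, ±l2, ±l3} (mod 1)` and `F²` has no fixed point on these arcs. -/
theorem statement4 (l1 l2 l3 τ : ℝ)
    (h1 : 0 < l1) (h2 : 0 < l2) (h3 : 0 < l3) (hsum : l1 + l2 + l3 = 1)
    (hτmax : max l1 (max l2 l3) < τ) (hτ : τ ≤ 1/2) :
    -- the six endpoints are in increasing order
    (0 < τ - l2 ∧ τ - l2 < l1 ∧ l1 < l1 + τ - l3 ∧ l1 + τ - l3 < l1 + l2 ∧
      l1 + l2 < l2 + τ ∧ l2 + τ < 1) ∧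
    -- lengths: |Ij^±| = xj/2 ± r  with  xj = 1 - 2*lj,  r = 1/2 - τ
    ((τ - l2) - 0 = (1 - 2*l2)/2 - (1/2 - τ) ∧
     l1 - (τ - l2) = (1 - 2*l3)/2 + (1/2 - τ) ∧
     (l1 + τ - l3) - l1 = (1 - 2*l3)/2 - (1/2 - τ) ∧
     (l1 + l2) - (l1 + τ - l3) = (1 - 2*l1)/2 + (1/2 - τ) ∧
     (l2 + τ) - (l1 + l2) = (1 - 2*l1)/2 - (1/2 - τ) ∧
     1 - (l2 + τ) = (1 - 2*l2)/2 + (1/2 - τ)) ∧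
    -- displacements of F² on the six arcs
    (∀ x ∈ Ioo (0:ℝ) (τ - l2),
        FF l1 l2 τ (FF l1 l2 τ (toCirc x)) = toCirc (x + l2)) ∧
    (∀ x ∈ Ioo (τ - l2) l1,
        FF l1 l2 τ (FF l1 l2 τ (toCirc x)) = toCirc (x - l3)) ∧
    (∀ x ∈ Ioo l1 (l1 + τ - l3),
        FF l1 l2 τ (FF l1 l2 τ (toCirc x)) = toCirc (x + l3)) ∧
    (∀ x ∈ Ioo (l1 + τ - l3) (l1 + l2),
        FF l1 l2 τ (FF l1 l2 τ (toCirc x)) = toCirc (x - l1)) ∧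
    (∀ x ∈ Ioo (l1 + l2) (l2 + τ),
        FF l1 l2 τ (FF l1 l2 τ (toCirc x)) = toCirc (x + l1)) ∧
    (∀ x ∈ Ioo (l2 + τ) 1,
        FF l1 l2 τ (FF l1 l2 τ (toCirc x)) = toCirc (x - l2)) ∧
    -- every displacement lies in {±l1, ±l2, ±l3} (mod 1)
    (∀ x ∈ Ioo (0:ℝ) (τ - l2) ∪ Ioo (τ - l2) l1 ∪ Ioo l1 (l1 + τ - l3) ∪
        Ioo (l1 + τ - l3) (l1 + l2) ∪ Ioo (l1 + l2) (l2 + τ) ∪ Ioo (l2 + τ) 1,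
      ∃ d ∈ ({l1, -l1, l2, -l2, l3, -l3} : Set ℝ),
        FF l1 l2 τ (FF l1 l2 τ (toCirc x)) = toCirc (x + d)) ∧
    -- F² has no fixed point on these arcs
    (∀ x ∈ Ioo (0:ℝ) (τ - l2) ∪ Ioo (τ - l2) l1 ∪ Ioo l1 (l1 + τ - l3) ∪
        Ioo (l1 + τ - l3) (l1 + l2) ∪ Ioo (l1 + l2) (l2 + τ) ∪ Ioo (l2 + τ) 1,
      FF l1 l2 τ (FF l1 l2 τ (toCirc x)) ≠ toCirc x) := by
  obtain ⟨hl1, hl2, hl3⟩ : l1 < τ ∧ l2 < τ ∧ l3 < τ := by simpa only [max_lt_iff] using hτmax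
  have hI2m := FF_FF_toCirc_eq_add_l2 hsum hl1 hl3 hτ
  have hI3p := FF_FF_toCirc_eq_sub_l3 hsum hl1 hl2 hτ
  have hI3m := FF_FF_toCirc_eq_add_l3 hsum hl1 hl2 hτ
  have hI1p := FF_FF_toCirc_eq_sub_l1 h1 hsum hl2 hl3
  have hI1m := FF_FF_toCirc_eq_add_l1 hsum hl2 hl3 hτ
  have hI2p := FF_FF_toCirc_eq_sub_l2 hsum hl1 hl3 hτ
  have hdisp : ∀ x ∈ Ioo (0:ℝ) (τ - l2) ∪ Ioo (τ - l2) l1 ∪ Ioo l1 (l1 + τ - l3) ∪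
      Ioo (l1 + τ - l3) (l1 + l2) ∪ Ioo (l1 + l2) (l2 + τ) ∪ Ioo (l2 + τ) 1,
      ∃ d ∈ ({l1, -l1, l2, -l2, l3, -l3} : Set ℝ),
        FF l1 l2 τ (FF l1 l2 τ (toCirc x)) = toCirc (x + d) := by
    rintro x (((((hx | hx) | hx) | hx) | hx) | hx)
    exacts [⟨l2, by simp, hI2m x hx⟩, ⟨-l3, by simp, by rw [hI3p x hx, sub_eq_add_neg]⟩,
      ⟨l3, by simp, hI3m x hx⟩, ⟨-l1, by simp, by rw [hI1p x hx, sub_eq_add_neg]⟩,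
      ⟨l1, by simp, hI1m x hx⟩, ⟨-l2, by simp, by rw [hI2p x hx, sub_eq_add_neg]⟩]
  refine ⟨⟨by linarith, by linarith, by linarith, by linarith, by linarith, by linarith⟩,
    ⟨by ring, by linarith, by linarith, by linarith, by linarith, by linarith⟩,
    hI2m, hI3p, hI3m, hI1p, hI1m, hI2p, hdisp, fun x hx ↦ ?_⟩
  obtain ⟨d, hd, hFx⟩ := hdisp x hx
  rw [hFx]
  rcases hd with rfl | rfl | rfl | rfl | rfl | rfl <;>
    exact toCirc_add_ne_self ⟨by linarith, by linarith⟩ (fun hd0 ↦ by linarith) x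

end
end

section
/- Let (l1, l2, l3) ∈ 𝓔 (so in particular l1, l2, l3 > 0 and l1 + l2 + l3 = 1). Then for every τ ∈ [0, 1/2], every point x ∈ ℝ/ℤ whose forward orbit under F = F_τ^{l1,l2,l3} never meets the three points 0, l1, l1+l2 (mod 1) is periodic: F^n(x) = x for some n ≥ 1. -/
open Set

noncomputable section

/-- One branch of the projectivized fully subtractive algorithm: the (strictly smallest)
coordinate `l j` is subtracted from the others and everything is renormalized by
`1 - 2 * l j`. -/
def fsStepAt (j : Fin 3) (l : Fin 3 → ℝ) : Fin 3 → ℝ :=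
  fun i => (if i = j then l j else l i - l j) / (1 - 2 * l j)

/-- Membership in the set `𝓔`: `l` belongs to the standard simplex and some iterate of
the projectivized fully subtractive algorithm (applied at the unique strictly smallest
coordinate) reaches `(1/3, 1/3, 1/3)`. -/
def InE (l : Fin 3 → ℝ) : Prop :=
  (∀ i, 0 ≤ l i) ∧ l 0 + l 1 + l 2 = 1 ∧
  ∃ (N : ℕ) (seq : ℕ → (Fin 3 → ℝ)), seq 0 = l ∧
    (∀ n < N, ∃ j, (∀ i, i ≠ j → seq n j < seq n i) ∧
      seq (n + 1) = fsStepAt j (seq n)) ∧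
    seq N = fun _ => 1/3

lemma toCirc_rep (x : AddCircle (1:ℝ)) : toCirc (rep x) = x :=
  (AddCircle.equivIco 1 0).symm_apply_apply x

lemma rep_mem_s13 (x : AddCircle (1:ℝ)) : rep x ∈ Ico (0:ℝ) 1 := by
  have := (AddCircle.equivIco 1 0 x).2; simpa [rep] using this

lemma toCirc_eq_iff {a b : ℝ} : toCirc a = toCirc b ↔ ∃ k : ℤ, a - b = k := by
  constructor
  · intro h
    have h2 : a - b ∈ AddSubgroup.zmultiples (1:ℝ) :=
      (QuotientAddGroup.eq_iff_sub_mem).mp h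
    obtain ⟨k, hk⟩ := AddSubgroup.mem_zmultiples_iff.mp h2
    exact ⟨k, by simpa [zsmul_eq_mul] using hk.symm⟩
  · rintro ⟨k, hk⟩
    apply (QuotientAddGroup.eq_iff_sub_mem).mpr
    rw [hk]
    simpa [zsmul_eq_mul] using AddSubgroup.zsmul_mem_zmultiples (1:ℝ) k

/-- one-step structure: the image is `D/q + τ - rep y` for an integer `D`. -/

lemma FF_inj (l1 l2 l3 τ : ℝ) (h1 : 0 < l1) (h2 : 0 < l2) (h3 : 0 < l3)
    (hsum : l1 + l2 + l3 = 1) : Function.Injective (FF l1 l2 τ) := by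
  intro x y h
  obtain ⟨hx1, hx2⟩ := rep_mem_s13 x
  obtain ⟨hy1, hy2⟩ := rep_mem_s13 y
  have key : rep x = rep y → x = y := fun e => by
    rw [← toCirc_rep x, ← toCirc_rep y, e]
  unfold FF at h
  split_ifs at h <;>
  · obtain ⟨k, hk⟩ := toCirc_eq_iff.mp h
    have hb1 : (-3:ℝ) < k := by linarith
    have hb2 : (k:ℝ) < 3 := by linarith
    have hb1' : (-3:ℤ) < k := by exact_mod_cast hb1
    have hb2' : k < 3 := by exact_mod_cast hb2
    interval_cases k <;> push_cast at hk <;>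
      first
        | (exact key (by linarith))
        | (exfalso; linarith)

lemma ratOfInE {l : Fin 3 → ℝ} (hE : InE l) : ∀ i, ∃ r : ℚ, l i = (r : ℝ) := by
  obtain ⟨-, -, N, seq, h0, hstep, hN⟩ := hE
  have claim : ∀ k, k ≤ N → ∀ i, ∃ r : ℚ, seq (N - k) i = (r : ℝ) := by
    intro k
    induction k with
    | zero =>
      intro _ i
      refine ⟨1/3, ?_⟩
      simp only [Nat.sub_zero, hN]
      norm_num
    | succ k ih =>
      intro hk i
      set n := N - (k+1) with hn_def
      have hn : n < N := by omega
      have hn1 : n + 1 = N - k := by omega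
      obtain ⟨j, hmin, hrec⟩ := hstep n hn
      have ihp : ∀ i, ∃ r : ℚ, seq (n+1) i = (r : ℝ) := by
        rw [hn1]; exact ih (by omega)
      set a := seq n j with ha_def
      set D := 1 - 2*a with hD_def
      have hD : D ≠ 0 := by
        intro hD0
        have hz : ∀ i, seq (n+1) i = 0 := by
          intro i
          rw [hrec]
          simp [fsStepAt, ← ha_def, ← hD_def, hD0]
        rcases Nat.lt_or_ge (n+1) N with hlt | hge
        · obtain ⟨j', hmin', -⟩ := hstep (n+1) hlt
          obtain ⟨i', hi'⟩ : ∃ i : Fin 3, i ≠ j' := by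
            by_cases h0' : j' = 0
            · exact ⟨1, by simp [h0']⟩
            · exact ⟨0, fun h => h0' h.symm⟩
          have := hmin' i' hi'
          rw [hz, hz] at this
          exact lt_irrefl 0 this
        · have hEq : n + 1 = N := by omega
          have := hz j
          rw [hEq, hN] at this
          norm_num at this
      obtain ⟨mj, hmj⟩ := ihp j
      have hmjval : seq (n+1) j = a / D := by
        rw [hrec]; simp [fsStepAt, ← ha_def, ← hD_def]
      have hmjD : (mj : ℝ) * D = a := by
        rw [← hmj, hmjval]; field_simp
      have hDm : (1 + 2*(mj:ℝ)) * D = 1 := by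
        have : D + 2*a = 1 := by rw [hD_def]; ring
        nlinarith [hmjD]
      have hInv : (1 + 2*mj : ℚ) ≠ 0 := by
        intro h0'
        have : (1 + 2*(mj:ℝ)) = 0 := by exact_mod_cast congrArg (Rat.cast : ℚ → ℝ) h0'
        rw [this] at hDm; norm_num at hDm
      have hDval : D = ((1/(1+2*mj) : ℚ) : ℝ) := by
        have h1 : (1 + 2*(mj:ℝ)) ≠ 0 := by exact_mod_cast hInv
        push_cast
        field_simp
        linarith [hDm]
      have haval : a = ((mj * (1/(1+2*mj)) : ℚ) : ℝ) := by
        push_cast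
        rw [← hmjD, hDval]
        push_cast
        ring
      by_cases hij : i = j
      · exact ⟨mj * (1/(1+2*mj)), by rw [hij, ← ha_def]; exact haval⟩
      · obtain ⟨mi, hmi⟩ := ihp i
        have hmival : seq (n+1) i = (seq n i - a) / D := by
          rw [hrec]; simp [fsStepAt, hij, ← ha_def, ← hD_def]
        have : seq n i = (mi:ℝ) * D + a := by
          rw [← hmi, hmival]; field_simp; ring
        refine ⟨mi * (1/(1+2*mj)) + mj * (1/(1+2*mj)), ?_⟩
        rw [this, hDval, haval]
        push_cast
        ring
  intro i
  have := claim N le_rfl i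
  rwa [Nat.sub_self, h0] at this

lemma FF_form (l1 l2 τ : ℝ) (q : ℕ) (A B : ℤ)
    (hq : 0 < q) (hA : (q:ℝ) * l1 = A) (hB : (q:ℝ) * l2 = B)
    (y : AddCircle (1:ℝ)) :
    ∃ D : ℤ, FF l1 l2 τ y = toCirc ((D:ℝ)/q + τ - rep y) := by
  have hq0 : (q:ℝ) ≠ 0 := by positivity
  have hl1 : l1 = (A:ℝ)/q := by field_simp; linarith
  have hl2 : l2 = (B:ℝ)/q := by field_simp; linarith
  unfold FF
  split_ifs
  · exact ⟨A, by rw [hl1]; congr 1; ring⟩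
  · exact ⟨2*A + B, by rw [hl1, hl2]; congr 1; push_cast; field_simp; ring⟩
  · refine ⟨A + B + q, by rw [hl1, hl2]; congr 1; push_cast; field_simp; ring⟩


lemma orbit_mem (l1 l2 τ : ℝ) (q : ℕ) (A B : ℤ)
    (hq : 0 < q) (hA : (q:ℝ) * l1 = A) (hB : (q:ℝ) * l2 = B)
    (x : AddCircle (1:ℝ)) (n : ℕ) :
    ∃ k : ℤ, (FF l1 l2 τ)^[n] x = toCirc (rep x + (k:ℝ)/q) ∨
      (FF l1 l2 τ)^[n] x = toCirc (τ - rep x + (k:ℝ)/q) := by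
  have hq0 : (q:ℝ) ≠ 0 := by positivity
  induction n with
  | zero =>
    refine ⟨0, Or.inl ?_⟩
    simp only [Function.iterate_zero_apply]
    have h0 : rep x + ((0:ℤ):ℝ)/q = rep x := by push_cast; ring
    rw [h0, toCirc_rep]
  | succ n ih =>
    obtain ⟨k, hk | hk⟩ := ih
    · obtain ⟨m, hm⟩ := toCirc_eq_iff.mp ((toCirc_rep _).trans hk)
      obtain ⟨D, hD⟩ := FF_form l1 l2 τ q A B hq hA hB ((FF l1 l2 τ)^[n] x)
      refine ⟨D - k - m*q, Or.inr ?_⟩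
      rw [Function.iterate_succ_apply', hD]
      apply toCirc_eq_iff.mpr ⟨0, ?_⟩
      have hrep : rep ((FF l1 l2 τ)^[n] x) = rep x + (k:ℝ)/q + m := by linarith
      rw [hrep]; push_cast; field_simp; ring
    · obtain ⟨m, hm⟩ := toCirc_eq_iff.mp ((toCirc_rep _).trans hk)
      obtain ⟨D, hD⟩ := FF_form l1 l2 τ q A B hq hA hB ((FF l1 l2 τ)^[n] x)
      refine ⟨D - k - m*q, Or.inl ?_⟩
      rw [Function.iterate_succ_apply', hD]
      apply toCirc_eq_iff.mpr ⟨0, ?_⟩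
      have hrep : rep ((FF l1 l2 τ)^[n] x) = τ - rep x + (k:ℝ)/q + m := by linarith
      rw [hrep]; push_cast; field_simp; ring


lemma orbit_finite_rec (l1 l2 τ : ℝ) (q : ℕ) (A B : ℤ)
    (hq : 0 < q) (hA : (q:ℝ) * l1 = A) (hB : (q:ℝ) * l2 = B)
    (x : AddCircle (1:ℝ)) :
    ∃ m n : ℕ, m < n ∧ (FF l1 l2 τ)^[m] x = (FF l1 l2 τ)^[n] x := by
  have hq0 : (q:ℝ) ≠ 0 := by positivity
  set g : Fin q × Bool → AddCircle (1:ℝ) := fun p =>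
    if p.2 then toCirc (τ - rep x + (p.1 : ℝ)/q) else toCirc (rep x + (p.1 : ℝ)/q) with hg
  have hmem : ∀ n : ℕ, (FF l1 l2 τ)^[n] x ∈ Set.range g := by
    intro n
    obtain ⟨k, hk | hk⟩ := orbit_mem l1 l2 τ q A B hq hA hB x n
    · refine ⟨(⟨(k % q).toNat, ?_⟩, false), ?_⟩
      · have h1 : 0 ≤ k % (q:ℤ) := Int.emod_nonneg k (by exact_mod_cast hq.ne')
        have h2 : k % (q:ℤ) < q := Int.emod_lt_of_pos k (by exact_mod_cast hq)
        omega
      · simp only [hg, if_neg Bool.false_ne_true]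
        rw [hk]
        apply toCirc_eq_iff.mpr ⟨-(k / q), ?_⟩
        have h1 : 0 ≤ k % (q:ℤ) := Int.emod_nonneg k (by exact_mod_cast hq.ne')
        have hrZ : ((k % (q:ℤ)).toNat : ℤ) = k - q * (k / q) := by
          rw [Int.toNat_of_nonneg h1, Int.emod_def]
        have hmodeq : (((k % (q:ℤ)).toNat : ℕ) : ℝ) = (k:ℝ) - q * ((k / q : ℤ) : ℝ) := by
          exact_mod_cast hrZ
        rw [hmodeq]; field_simp; push_cast; ring
    · refine ⟨(⟨(k % q).toNat, ?_⟩, true), ?_⟩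
      · have h1 : 0 ≤ k % (q:ℤ) := Int.emod_nonneg k (by exact_mod_cast hq.ne')
        have h2 : k % (q:ℤ) < q := Int.emod_lt_of_pos k (by exact_mod_cast hq)
        omega
      · simp only [hg, if_pos rfl]
        rw [hk]
        apply toCirc_eq_iff.mpr ⟨-(k / q), ?_⟩
        have h1 : 0 ≤ k % (q:ℤ) := Int.emod_nonneg k (by exact_mod_cast hq.ne')
        have hrZ : ((k % (q:ℤ)).toNat : ℤ) = k - q * (k / q) := by
          rw [Int.toNat_of_nonneg h1, Int.emod_def]
        have hmodeq : (((k % (q:ℤ)).toNat : ℕ) : ℝ) = (k:ℝ) - q * ((k / q : ℤ) : ℝ) := by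
          exact_mod_cast hrZ
        rw [hmodeq]; field_simp; push_cast; ring
  have hfin : (Set.range g).Finite := Set.finite_range g
  haveI := hfin.to_subtype
  have := Finite.exists_ne_map_eq_of_infinite
    (fun n : ℕ => (⟨(FF l1 l2 τ)^[n] x, hmem n⟩ : Set.range g))
  obtain ⟨m, n, hmn, he⟩ := this
  have he' : (FF l1 l2 τ)^[m] x = (FF l1 l2 τ)^[n] x := congrArg Subtype.val he
  rcases lt_or_gt_of_ne hmn with h | h
  · exact ⟨m, n, h, he'⟩
  · exact ⟨n, m, h, he'.symm⟩

/-- If `(l1,l2,l3) ∈ 𝓔`, then for every `τ ∈ [0,1/2]`, every point whose forward orbit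
under `F_τ^{l1,l2,l3}` avoids the three singularities `0, l1, l1+l2` is periodic. -/
theorem statement13 (l1 l2 l3 τ : ℝ)
    (h1 : 0 < l1) (h2 : 0 < l2) (h3 : 0 < l3) (hsum : l1 + l2 + l3 = 1)
    (hE : InE ![l1, l2, l3])
    (hτ0 : 0 ≤ τ) (hτ : τ ≤ 1/2) :
    ∀ x : AddCircle (1:ℝ),
      (∀ n : ℕ, (FF l1 l2 τ)^[n] x ≠ toCirc 0 ∧ (FF l1 l2 τ)^[n] x ≠ toCirc l1 ∧
        (FF l1 l2 τ)^[n] x ≠ toCirc (l1 + l2)) →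
      ∃ n : ℕ, 1 ≤ n ∧ (FF l1 l2 τ)^[n] x = x := by
  intro x _
  have hl1 : (![l1, l2, l3] : Fin 3 → ℝ) 0 = l1 := rfl
  have hl2 : (![l1, l2, l3] : Fin 3 → ℝ) 1 = l2 := rfl
  obtain ⟨r1, hr1⟩ := ratOfInE hE 0
  obtain ⟨r2, hr2⟩ := ratOfInE hE 1
  rw [hl1] at hr1
  rw [hl2] at hr2
  set q : ℕ := r1.den * r2.den with hq_def
  have hq : 0 < q := Nat.mul_pos r1.pos r2.pos
  have hd1 : ((r1.den : ℝ)) ≠ 0 := by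
    exact_mod_cast r1.den_nz
  have hd2 : ((r2.den : ℝ)) ≠ 0 := by
    exact_mod_cast r2.den_nz
  have hA : (q:ℝ) * l1 = ((r1.num * r2.den : ℤ) : ℝ) := by
    rw [hr1, hq_def, Rat.cast_def]
    push_cast
    field_simp
  have hB : (q:ℝ) * l2 = ((r2.num * r1.den : ℤ) : ℝ) := by
    rw [hr2, hq_def, Rat.cast_def]
    push_cast
    field_simp
  obtain ⟨m, n, hmn, he⟩ :=
    orbit_finite_rec l1 l2 τ q (r1.num * r2.den) (r2.num * r1.den) hq hA hB x
  have hinj := (FF_inj l1 l2 l3 τ h1 h2 h3 hsum).iterate m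
  refine ⟨n - m, by omega, ?_⟩
  apply hinj
  calc (FF l1 l2 τ)^[m] ((FF l1 l2 τ)^[n - m] x)
      = (FF l1 l2 τ)^[m + (n - m)] x := (Function.iterate_add_apply _ m (n-m) x).symm
    _ = (FF l1 l2 τ)^[n] x := by congr 1; omega
    _ = (FF l1 l2 τ)^[m] x := he.symm

end
end
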